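/- arXiv:2003.08280 — 2 statements merged into one kernel-verified Lean document; each statement's English description precedes it below -/
import Mathlib

section
/- Let f be a finite measurable function on (X, 𝒳, μ, T) and let q be a fixed integer. If limsup_n (1/n)|f∘T^{-n} − f∘T^{n+q}| < +∞ almost everywhere on a set of positive measure, then (1/n) f∘T^n converges to 0 μ-almost everywhere on X. -/
/-!
Fix `M, N` such that `A = {y | ∀ n ≥ N, |f (T⁻ⁿ y) - f (Tⁿ⁺ᵠ y)| ≤ M n}` has positive measure.
By Birkhoff's ergodic theorem for indicator functions, for a.e. `x` the times `j` with
`Tʲ x ∈ A` have density `μ A`, and the times `s` with `|f (Tˢ x)| ≥ L` have density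
`μ {|f| ≥ L}`, which tends to `0` as `L → ∞`. If
`|f (Tᵐ x)| > ε m`, a visit to `A` at a time `j` a little before `m` reflects this to
`|f (T²ʲ⁺ᵠ⁻ᵐ x)| ≥ L` with `0 ≤ 2j + q - m ≤ m`; the visits in a window of length `≈ ε m / M`
would then produce too many large values of `|f|` along `[0, m]`.
-/

open MeasureTheory Filter Topology Finset

section MaximalErgodic

variable {α : Type*} {f : α → α} {g : α → ℝ}

/-- `maxBirkhoffSum f g n x = max {0, birkhoffSum f g 1 x, …, birkhoffSum f g n x}`. -/
noncomputable def maxBirkhoffSum (f : α → α) (g : α → ℝ) : ℕ → α → ℝ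
  | 0 => 0
  | n + 1 => fun x => max 0 (g x + maxBirkhoffSum f g n (f x))

lemma maxBirkhoffSum_succ (n : ℕ) (x : α) :
    maxBirkhoffSum f g (n + 1) x = max 0 (g x + maxBirkhoffSum f g n (f x)) := rfl

lemma maxBirkhoffSum_nonneg (n : ℕ) (x : α) : 0 ≤ maxBirkhoffSum f g n x := by
  cases n with
  | zero => rfl
  | succ n => exact le_max_left _ _

lemma maxBirkhoffSum_le_maxBirkhoffSum_succ (n : ℕ) (x : α) :
    maxBirkhoffSum f g n x ≤ maxBirkhoffSum f g (n + 1) x := by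
  induction n generalizing x with
  | zero => exact maxBirkhoffSum_nonneg _ _
  | succ n ih => exact max_le_max le_rfl (add_le_add le_rfl (ih (f x)))

lemma birkhoffSum_le_maxBirkhoffSum (n : ℕ) (x : α) :
    birkhoffSum f g n x ≤ maxBirkhoffSum f g n x := by
  induction n generalizing x with
  | zero => simp [maxBirkhoffSum]
  | succ n ih =>
    rw [birkhoffSum_succ', maxBirkhoffSum_succ]
    exact (add_le_add le_rfl (ih (f x))).trans (le_max_right _ _)

lemma exists_maxBirkhoffSum_eq_birkhoffSum (n : ℕ) (x : α) :
    ∃ k, maxBirkhoffSum f g n x = birkhoffSum f g k x := by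
  induction n generalizing x with
  | zero => exact ⟨0, by simp [maxBirkhoffSum]⟩
  | succ n ih =>
    obtain ⟨k, hk⟩ := ih (f x)
    rcases max_choice 0 (g x + maxBirkhoffSum f g n (f x)) with h | h
    · exact ⟨0, by rw [maxBirkhoffSum_succ, h, birkhoffSum_zero]⟩
    · exact ⟨k + 1, by rw [maxBirkhoffSum_succ, h, hk, birkhoffSum_succ']⟩

lemma maxBirkhoffSum_le_birkhoffSum_abs (n : ℕ) (x : α) :
    maxBirkhoffSum f g n x ≤ birkhoffSum f (fun y => |g y|) n x := by
  induction n generalizing x with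
  | zero => simp [maxBirkhoffSum]
  | succ n ih =>
    rw [maxBirkhoffSum_succ, birkhoffSum_succ']
    have ih := ih (f x)
    exact max_le (add_nonneg (abs_nonneg _) ((maxBirkhoffSum_nonneg _ _).trans ih))
      (add_le_add (le_abs_self _) ih)

variable [MeasurableSpace α] {μ : Measure α}

lemma measurable_maxBirkhoffSum (hf : Measurable f) (hg : Measurable g) (n : ℕ) :
    Measurable (maxBirkhoffSum f g n) := by
  induction n with
  | zero => exact measurable_const
  | succ n ih => exact measurable_const.max (hg.add (ih.comp hf))

lemma MeasureTheory.MeasurePreserving.integrable_birkhoffSum (hf : MeasurePreserving f μ μ)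
    (hg : Integrable g μ) (n : ℕ) : Integrable (birkhoffSum f g n) μ :=
  integrable_finsetSum _ fun k _ => (hf.iterate k).integrable_comp_of_integrable hg

lemma MeasureTheory.MeasurePreserving.integrable_maxBirkhoffSum (hf : MeasurePreserving f μ μ)
    (hgm : Measurable g) (hg : Integrable g μ) (n : ℕ) :
    Integrable (maxBirkhoffSum f g n) μ :=
  (hf.integrable_birkhoffSum hg.abs n).mono'
    (measurable_maxBirkhoffSum hf.measurable hgm n).aestronglyMeasurable
    (Eventually.of_forall fun x => by
      rw [Real.norm_of_nonneg (maxBirkhoffSum_nonneg n x)]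
      exact maxBirkhoffSum_le_birkhoffSum_abs n x)

/-- Garsia's argument: on `{0 < maxBirkhoffSum f g (n + 1)}`, `g` equals
`D = maxBirkhoffSum f g (n + 1) - maxBirkhoffSum f g n ∘ f`; `D ≤ 0` off that set, and `∫ D ≥ 0`
since `f` preserves `μ` and `maxBirkhoffSum` is monotone in `n`. -/
lemma MeasureTheory.MeasurePreserving.setIntegral_maxBirkhoffSum_pos_nonneg
    (hf : MeasurePreserving f μ μ) (hgm : Measurable g) (hg : Integrable g μ) (n : ℕ) :
    0 ≤ ∫ x in {x | 0 < maxBirkhoffSum f g (n + 1) x}, g x ∂μ := by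
  set E := {x | 0 < maxBirkhoffSum f g (n + 1) x}
  have hE : MeasurableSet E :=
    measurableSet_lt measurable_const (measurable_maxBirkhoffSum hf.measurable hgm _)
  have hM := hf.integrable_maxBirkhoffSum hgm hg
  have hMf : Integrable (fun x => maxBirkhoffSum f g n (f x)) μ :=
    hf.integrable_comp_of_integrable (hM n)
  set D : α → ℝ := fun x => maxBirkhoffSum f g (n + 1) x - maxBirkhoffSum f g n (f x)
  have hgD : ∫ x in E, g x ∂μ = ∫ x in E, D x ∂μ := by
    refine setIntegral_congr_fun hE fun x hx => ?_
    have : maxBirkhoffSum f g (n + 1) x = g x + maxBirkhoffSum f g n (f x) :=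
      (max_choice _ _).resolve_left (ne_of_gt hx)
    simp only [D, this, add_sub_cancel_right]
  have hD_compl : ∫ x in Eᶜ, D x ∂μ ≤ 0 := by
    refine setIntegral_nonpos hE.compl fun x hx => ?_
    have : maxBirkhoffSum f g (n + 1) x = 0 :=
      le_antisymm (not_lt.mp hx) (maxBirkhoffSum_nonneg _ _)
    simp only [D, this, zero_sub, neg_nonpos]
    exact maxBirkhoffSum_nonneg _ _
  have hD : 0 ≤ ∫ x, D x ∂μ := by
    have hcomp : ∫ x, maxBirkhoffSum f g n (f x) ∂μ = ∫ x, maxBirkhoffSum f g n x ∂μ := by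
      rw [← integral_map hf.aemeasurable
        (measurable_maxBirkhoffSum hf.measurable hgm n).aestronglyMeasurable, hf.map_eq]
    rw [integral_sub (hM _) hMf, hcomp, sub_nonneg]
    exact integral_mono (hM n) (hM _) (maxBirkhoffSum_le_maxBirkhoffSum_succ n)
  rw [hgD]
  linarith [integral_add_compl (f := D) hE ((hM (n + 1)).sub hMf)]

theorem MeasureTheory.MeasurePreserving.setIntegral_exists_birkhoffSum_pos_nonneg
    (hf : MeasurePreserving f μ μ) (hgm : Measurable g) (hg : Integrable g μ) :
    0 ≤ ∫ x in {x | ∃ n, 0 < birkhoffSum f g n x}, g x ∂μ := by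
  set E : ℕ → Set α := fun n => {x | 0 < maxBirkhoffSum f g (n + 1) x}
  have hE : ∀ n, MeasurableSet (E n) := fun n =>
    measurableSet_lt measurable_const (measurable_maxBirkhoffSum hf.measurable hgm _)
  have hE_mono : Monotone E := monotone_nat_of_le_succ fun n x hx =>
    hx.trans_le (maxBirkhoffSum_le_maxBirkhoffSum_succ _ x)
  have hE_iUnion : ⋃ n, E n = {x | ∃ n, 0 < birkhoffSum f g n x} := by
    ext x
    simp only [Set.mem_iUnion, Set.mem_ofPred_eq, E]
    constructor
    · rintro ⟨n, hn⟩
      obtain ⟨k, hk⟩ := exists_maxBirkhoffSum_eq_birkhoffSum (f := f) (g := g) (n + 1) x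
      exact ⟨k, hk ▸ hn⟩
    · rintro ⟨n, hn⟩
      refine ⟨n, hn.trans_le ((birkhoffSum_le_maxBirkhoffSum n x).trans ?_)⟩
      exact maxBirkhoffSum_le_maxBirkhoffSum_succ n x
  have := tendsto_setIntegral_of_monotone hE hE_mono hg.integrableOn
  rw [hE_iUnion] at this
  exact ge_of_tendsto' this fun n => hf.setIntegral_maxBirkhoffSum_pos_nonneg hgm hg n

end MaximalErgodic

lemma limsup_le_limsup_of_tendsto_sub {u v : ℕ → ℝ} (hu : IsBoundedUnder (· ≥ ·) atTop u)
    (hv : IsBoundedUnder (· ≤ ·) atTop v) (h : Tendsto (fun n => u n - v n) atTop (𝓝 0)) :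
    limsup u atTop ≤ limsup v atTop := by
  refine le_of_forall_pos_le_add fun ε hε => limsup_le_of_le hu.isCoboundedUnder_le ?_
  filter_upwards [eventually_lt_of_limsup_lt (lt_add_of_pos_right _ (half_pos hε)) hv,
    h.eventually (gt_mem_nhds (half_pos hε))] with n hv hu
  linarith

section Birkhoff

variable {α : Type*} {f : α → α} {g : α → ℝ} {C : ℝ}

lemma abs_birkhoffAverage_le (hC : ∀ x, |g x| ≤ C) (n : ℕ) (x : α) :
    |birkhoffAverage ℝ f g n x| ≤ C := by
  rcases n.eq_zero_or_pos with rfl | hn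
  · simpa using (abs_nonneg _).trans (hC x)
  rw [birkhoffAverage, smul_eq_mul, abs_mul, abs_inv, Nat.abs_cast,
    inv_mul_le_iff₀ (by positivity)]
  calc |birkhoffSum f g n x| ≤ ∑ k ∈ range n, |g (f^[k] x)| := abs_sum_le_sum_abs _ _
    _ ≤ ∑ _k ∈ range n, C := sum_le_sum fun k _ => hC (f^[k] x)
    _ = n * C := by rw [sum_const, card_range, nsmul_eq_mul]

lemma isBoundedUnder_le_birkhoffAverage (hC : ∀ x, |g x| ≤ C) (x : α) :
    IsBoundedUnder (· ≤ ·) atTop (fun n => birkhoffAverage ℝ f g n x) :=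
  isBoundedUnder_of ⟨C, fun n => (abs_le.mp (abs_birkhoffAverage_le hC n x)).2⟩

lemma isBoundedUnder_ge_birkhoffAverage (hC : ∀ x, |g x| ≤ C) (x : α) :
    IsBoundedUnder (· ≥ ·) atTop (fun n => birkhoffAverage ℝ f g n x) :=
  isBoundedUnder_of ⟨-C, fun n => (abs_le.mp (abs_birkhoffAverage_le hC n x)).1⟩

lemma limsup_birkhoffAverage_apply (hC : ∀ x, |g x| ≤ C) (x : α) :
    limsup (fun n => birkhoffAverage ℝ f g n (f x)) atTop
      = limsup (fun n => birkhoffAverage ℝ f g n x) atTop := by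
  have h := tendsto_birkhoffAverage_apply_sub_birkhoffAverage' ℝ
    ((isBounded_iff_forall_norm_le (E := ℝ)).2 ⟨C, Set.forall_mem_range.2 hC⟩) f x
  refine le_antisymm (limsup_le_limsup_of_tendsto_sub (isBoundedUnder_ge_birkhoffAverage hC _)
    (isBoundedUnder_le_birkhoffAverage hC _) h)
    (limsup_le_limsup_of_tendsto_sub (isBoundedUnder_ge_birkhoffAverage hC _)
    (isBoundedUnder_le_birkhoffAverage hC _) (by simpa using h.neg))

variable [MeasurableSpace α] {μ : Measure α} [IsProbabilityMeasure μ]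

lemma measurable_limsup_birkhoffAverage (hf : Measurable f) (hg : Measurable g) :
    Measurable fun x => limsup (fun n => birkhoffAverage ℝ f g n x) atTop :=
  Measurable.limsup fun n =>
    (Finset.measurable_sum (range n) fun k _ => hg.comp (hf.iterate k)).const_smul ((n : ℝ)⁻¹)

/-- The limsup of the averages is invariant, hence a.e. equal to a constant `c`; if `c` exceeded
`∫ g`, then for `r` strictly in between, almost every point would have a positive Birkhoff sum of
`g - r`, and the maximal ergodic theorem would give `∫ (g - r) ≥ 0`. -/
theorem Ergodic.ae_limsup_birkhoffAverage_le_integral (hf : Ergodic f μ) (hg : Measurable g)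
    (hC : ∀ x, |g x| ≤ C) :
    ∀ᵐ x ∂μ, limsup (fun n => birkhoffAverage ℝ f g n x) atTop ≤ ∫ x, g x ∂μ := by
  obtain ⟨c, hc⟩ := hf.ae_eq_const_of_ae_eq_comp_ae
    (measurable_limsup_birkhoffAverage hf.measurable hg).aestronglyMeasurable
    (Eventually.of_forall fun x => limsup_birkhoffAverage_apply hC x)
  suffices c ≤ ∫ x, g x ∂μ from hc.mono fun x hx => hx.trans_le this
  by_contra! hlt
  obtain ⟨r, hIr, hrc⟩ := exists_between hlt
  have hg_int : Integrable g μ :=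
    (integrable_const C).mono' hg.aestronglyMeasurable (Eventually.of_forall hC)
  have hpos : ∀ᵐ x ∂μ, x ∈ {x | ∃ n, 0 < birkhoffSum f (fun y => g y - r) n x} := by
    filter_upwards [hc] with x hx
    have hr : r < limsup (fun n => birkhoffAverage ℝ f g n x) atTop := by
      rwa [hx]
    obtain ⟨n, hn, hn1⟩ := ((frequently_lt_of_lt_limsup
      (isBoundedUnder_ge_birkhoffAverage hC x).isCoboundedUnder_le hr).and_eventually
      (eventually_ge_atTop 1)).exists
    refine ⟨n, ?_⟩
    have hn0 : (0 : ℝ) < n := by exact_mod_cast hn1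
    rw [birkhoffAverage, smul_eq_mul, ← div_eq_inv_mul, lt_div_iff₀ hn0] at hn
    simp only [birkhoffSum, sum_sub_distrib, sum_const, card_range, nsmul_eq_mul]
    rw [← birkhoffSum]
    linarith
  have := hf.toMeasurePreserving.setIntegral_exists_birkhoffSum_pos_nonneg
    (g := fun y => g y - r) (hg.sub measurable_const) (hg_int.sub (integrable_const r))
  rw [Measure.restrict_eq_self_of_ae_mem hpos, integral_sub hg_int (integrable_const r),
    integral_const, probReal_univ, one_smul] at this
  linarith

theorem Ergodic.ae_tendsto_birkhoffAverage_integral (hf : Ergodic f μ) (hg : Measurable g)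
    (hC : ∀ x, |g x| ≤ C) :
    ∀ᵐ x ∂μ, Tendsto (fun n => birkhoffAverage ℝ f g n x) atTop (𝓝 (∫ x, g x ∂μ)) := by
  have hC' : ∀ x, |(-g) x| ≤ C := by simpa using hC
  filter_upwards [hf.ae_limsup_birkhoffAverage_le_integral hg hC,
    hf.ae_limsup_birkhoffAverage_le_integral hg.neg hC'] with x hx hx'
  simp only [birkhoffAverage_neg, Pi.neg_apply, integral_neg] at hx'
  refine tendsto_order.2 ⟨fun a ha => ?_, fun b hb =>
    eventually_lt_of_limsup_lt (hx.trans_lt hb) (isBoundedUnder_le_birkhoffAverage hC x)⟩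
  filter_upwards [eventually_lt_of_limsup_lt (hx'.trans_lt (neg_lt_neg ha))
    (by simpa [birkhoffAverage_neg] using isBoundedUnder_le_birkhoffAverage (f := f) hC' x)]
    with n hn
  exact neg_lt_neg_iff.1 hn

open scoped Classical in
theorem Ergodic.ae_tendsto_card_filter_range_div (hf : Ergodic f μ) {s : Set α}
    (hs : MeasurableSet s) :
    ∀ᵐ x ∂μ, Tendsto (fun n : ℕ => (#{k ∈ range n | f^[k] x ∈ s} : ℝ) / n) atTop
      (𝓝 (μ.real s)) := by
  have hC : ∀ x, |s.indicator (1 : α → ℝ) x| ≤ 1 := fun x => by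
    by_cases hx : x ∈ s <;> simp [hx]
  filter_upwards [hf.ae_tendsto_birkhoffAverage_integral (g := s.indicator 1)
    (measurable_const.indicator hs) hC]
    with x hx
  rw [integral_indicator_one hs] at hx
  refine hx.congr fun n => ?_
  simp only [birkhoffAverage, birkhoffSum, smul_eq_mul, natCast_card_filter, Set.indicator_apply,
    Pi.one_apply, div_eq_inv_mul]

end Birkhoff

section Reflection

open scoped Classical

variable {v : ℕ → Prop} {a : ℝ}

lemma tendsto_card_filter_range_floor_mul_div {γ : ℝ} (hγ : 0 < γ)
    (hv : Tendsto (fun n : ℕ => (#{j ∈ range n | v j} : ℝ) / n) atTop (𝓝 a)) :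
    Tendsto (fun m : ℕ => (#{j ∈ range ⌊γ * m⌋₊ | v j} : ℝ) / m) atTop (𝓝 (a * γ)) := by
  have hfloor : Tendsto (fun m : ℕ => (⌊γ * m⌋₊ : ℝ) / m) atTop (𝓝 γ) :=
    (tendsto_nat_floor_mul_div_atTop hγ.le).comp tendsto_natCast_atTop_atTop
  refine ((hv.comp (tendsto_nat_floor_mul_atTop γ hγ)).mul hfloor).congr fun m => ?_
  rcases eq_or_ne ⌊γ * m⌋₊ 0 with h | h
  · simp [h]
  · exact div_mul_div_cancel₀ (by exact_mod_cast h)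

lemma tendsto_card_filter_Ico_floor_mul_div {γ₁ γ₂ : ℝ} (hγ₁ : 0 < γ₁) (hγ : γ₁ ≤ γ₂)
    (hv : Tendsto (fun n : ℕ => (#{j ∈ range n | v j} : ℝ) / n) atTop (𝓝 a)) :
    Tendsto (fun m : ℕ => (#{j ∈ Ico ⌊γ₁ * m⌋₊ ⌊γ₂ * m⌋₊ | v j} : ℝ) / m) atTop
      (𝓝 (a * (γ₂ - γ₁))) := by
  rw [mul_sub]
  refine ((tendsto_card_filter_range_floor_mul_div (hγ₁.trans_le hγ) hv).sub
    (tendsto_card_filter_range_floor_mul_div hγ₁ hv)).congr fun m => ?_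
  have hle : ⌊γ₁ * m⌋₊ ≤ ⌊γ₂ * m⌋₊ := Nat.floor_le_floor (by gcongr)
  simp only [natCast_card_filter, sum_Ico_eq_sub _ hle, sub_div]

lemma card_le_card_of_forall_exists_eq_two_mul_add {J K : Finset ℕ} {r : ℤ}
    (h : ∀ j ∈ J, ∃ s ∈ K, (s : ℤ) = 2 * j + r) : #J ≤ #K := by
  refine card_le_card_of_injOn (fun j => (2 * j + r).toNat) (fun j hj => ?_)
    fun j hj j' hj' hjj' => ?_
  · obtain ⟨s, hs, hsj⟩ := h j hj
    simpa [← hsj] using hs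
  · obtain ⟨s, -, hsj⟩ := h j hj
    obtain ⟨s', -, hsj'⟩ := h j' hj'
    simp only at hjj'
    omega

variable {b : ℤ → ℝ} {q : ℤ} {N : ℕ} {M : ℝ}

-- The ascription `(s : ℕ)` keeps the filter a `Finset ℕ`; otherwise `range (m + 1)` is
-- coerced to a `Finset ℤ` so that `b s` typechecks.
lemma exists_mem_filter_le_abs_of_reflection
    (hrefl : ∀ j, v j → ∀ n : ℕ, N ≤ n → |b (j - n) - b (j + (n + q))| / n ≤ M) (hM : 0 ≤ M)
    {m j : ℕ} {β ε L : ℝ} (hβ : β ≤ 1 / 8) (hMβ : M * β ≤ ε / 8)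
    (hmN : N + |(q : ℝ)| ≤ β * m) (hmq : 4 + 2 * |(q : ℝ)| ≤ m)
    (hmL : M * (1 + |(q : ℝ)|) + L ≤ ε / 2 * m) (hbm : ε * m < |b m|)
    (hj : j ∈ Ico ⌊(1 - 2 * β) * m⌋₊ ⌊(1 - β) * m⌋₊) (hvj : v j) :
    ∃ s : ℕ, s ∈ {s ∈ range (m + 1) | L ≤ |b (s : ℕ)|} ∧ (s : ℤ) = 2 * j + (q - m) := by
  have hq := abs_nonneg (q : ℝ)
  have hq₁ := le_abs_self (q : ℝ)
  have hq₂ := neg_abs_le (q : ℝ)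
  have hβm : β * m ≤ m / 8 := by nlinarith
  have hMβm : M * (β * m) ≤ ε / 8 * m := by nlinarith
  obtain ⟨hj₁, hj₂⟩ := mem_Ico.1 hj
  have hj₁ : (1 - 2 * β) * m - 1 < j := by
    have : (⌊(1 - 2 * β) * m⌋₊ : ℝ) ≤ j := by exact_mod_cast hj₁
    linarith [Nat.lt_floor_add_one ((1 - 2 * β) * m)]
  have hj₂ : (j : ℝ) + 1 ≤ (1 - β) * m := by
    have : (j : ℝ) + 1 ≤ ⌊(1 - β) * m⌋₊ := by exact_mod_cast hj₂
    linarith [Nat.floor_le (by nlinarith : 0 ≤ (1 - β) * m)]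
  obtain ⟨n, hn⟩ : ∃ n : ℕ, (n : ℤ) = m - j - q :=
    ⟨_, Int.toNat_of_nonneg (by exact_mod_cast (by linarith : (0 : ℝ) ≤ m - j - q))⟩
  have hnR : (n : ℝ) = m - j - q := by exact_mod_cast hn
  have hn₀ : (0 : ℝ) < n := by linarith
  have hbn := hrefl j hvj n (by exact_mod_cast (by linarith : (N : ℝ) ≤ n))
  rw [div_le_iff₀ hn₀, show (j : ℤ) - n = 2 * j + (q - m) by omega,
    show (j : ℤ) + (n + q) = m by omega] at hbn
  obtain ⟨s, hs⟩ : ∃ s : ℕ, (s : ℤ) = 2 * j + (q - m) :=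
    ⟨_, Int.toNat_of_nonneg (by exact_mod_cast (by linarith : (0 : ℝ) ≤ 2 * j + (q - m)))⟩
  have hsR : (s : ℝ) = 2 * j + (q - m) := by exact_mod_cast hs
  refine ⟨s, mem_filter.2 ⟨mem_range.2 ?_, ?_⟩, hs⟩
  · exact_mod_cast (by linarith : (s : ℝ) < m + 1)
  · have hMn : M * n ≤ M * (2 * (β * m) + 1 + |(q : ℝ)|) :=
      mul_le_mul_of_nonneg_left (by linarith) hM
    have := abs_sub_abs_le_abs_sub (b m) (b s)
    rw [abs_sub_comm, hs] at this
    rw [hs]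
    nlinarith [mul_nonneg hM (by linarith : 0 ≤ β * m)]

/-- Take `β = min (ε / 8M) (1 / 8)`. Visits of `v` fill a fraction `≈ αβ` of the window
`[(1 - 2β) m, (1 - β) m)`, and if `|b m| > ε m` each of them yields, injectively, a time in
`[0, m]` where `|b| ≥ L`; but `L` is chosen so that such times have density `< αβ / 4`. -/
lemma eventually_abs_le_mul_of_reflection {α : ℝ} (hα : 0 < α) (hM : 0 < M)
    (hv : Tendsto (fun n : ℕ => (#{j ∈ range n | v j} : ℝ) / n) atTop (𝓝 α))
    (hrefl : ∀ j, v j → ∀ n : ℕ, N ≤ n → |b (j - n) - b (j + (n + q))| / n ≤ M) {p : ℕ → ℝ}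
    (hlevel : ∀ L : ℕ,
      Tendsto (fun n : ℕ => (#{s ∈ range n | (L : ℝ) ≤ |b (s : ℕ)|} : ℝ) / n) atTop (𝓝 (p L)))
    (hp : Tendsto p atTop (𝓝 0)) {ε : ℝ} (hε : 0 < ε) :
    ∀ᶠ m : ℕ in atTop, |b m| ≤ ε * m := by
  set β := min (ε / (8 * M)) (1 / 8)
  have hβ₀ : 0 < β := lt_min (by positivity) (by norm_num)
  have hβ : β ≤ 1 / 8 := min_le_right _ _
  have hMβ : M * β ≤ ε / 8 :=
    calc M * β ≤ M * (ε / (8 * M)) := mul_le_mul_of_nonneg_left (min_le_left _ _) hM.le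
      _ = ε / 8 := by field_simp
  have hαβ := mul_pos hα hβ₀
  obtain ⟨L, hL⟩ := (hp.eventually (gt_mem_nhds (by positivity : 0 < α * β / 4))).exists
  have hwindow : ∀ᶠ m : ℕ in atTop, α * β / 2 <
      (#{j ∈ Ico ⌊(1 - 2 * β) * m⌋₊ ⌊(1 - β) * m⌋₊ | v j} : ℝ) / m := by
    refine (tendsto_card_filter_Ico_floor_mul_div (by linarith) (by linarith) hv).eventually
      (lt_mem_nhds ?_)
    linarith
  have hlevel' : ∀ᶠ m : ℕ in atTop,
      (#{s ∈ range (m + 1) | (L : ℝ) ≤ |b (s : ℕ)|} : ℝ) / (m + 1 : ℕ) < α * β / 4 :=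
    ((hlevel L).comp (tendsto_add_atTop_nat 1)).eventually (gt_mem_nhds hL)
  have hm := tendsto_natCast_atTop_atTop (R := ℝ)
  filter_upwards [hwindow, hlevel', (hm.const_mul_atTop hβ₀).eventually_ge_atTop (N + |(q : ℝ)|),
    hm.eventually_ge_atTop (4 + 2 * |(q : ℝ)|),
    (hm.const_mul_atTop (half_pos hε)).eventually_ge_atTop (M * (1 + |(q : ℝ)|) + L)]
    with m hJ hK hmN hmq hmL
  by_contra! hbm
  have hcard := card_le_card_of_forall_exists_eq_two_mul_add fun j hj =>
    exists_mem_filter_le_abs_of_reflection hrefl hM.le hβ hMβ hmN hmq hmL hbm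
      (mem_filter.1 hj).1 (mem_filter.1 hj).2
  have hm₀ : (0 : ℝ) < m := by linarith [abs_nonneg (q : ℝ)]
  rw [lt_div_iff₀ hm₀] at hJ
  rw [div_lt_iff₀ (by positivity)] at hK
  have hcard' : (#{j ∈ Ico ⌊(1 - 2 * β) * m⌋₊ ⌊(1 - β) * m⌋₊ | v j} : ℝ)
      ≤ #{s ∈ range (m + 1) | (L : ℝ) ≤ |b (s : ℕ)|} := by exact_mod_cast hcard
  have : α * β / 4 * (m + 1) ≤ α * β / 2 * m := by nlinarith [abs_nonneg (q : ℝ)]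
  push_cast at hK
  linarith

theorem tendsto_div_natCast_of_reflection {α : ℝ} (hα : 0 < α) (hM : 0 < M)
    (hv : Tendsto (fun n : ℕ => (#{j ∈ range n | v j} : ℝ) / n) atTop (𝓝 α))
    (hrefl : ∀ j, v j → ∀ n : ℕ, N ≤ n → |b (j - n) - b (j + (n + q))| / n ≤ M) {p : ℕ → ℝ}
    (hlevel : ∀ L : ℕ,
      Tendsto (fun n : ℕ => (#{s ∈ range n | (L : ℝ) ≤ |b (s : ℕ)|} : ℝ) / n) atTop (𝓝 (p L)))
    (hp : Tendsto p atTop (𝓝 0)) :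
    Tendsto (fun m : ℕ => b m / m) atTop (𝓝 0) := by
  refine (NormedAddGroup.tendsto_nhds_zero).2 fun ε hε => ?_
  filter_upwards [eventually_abs_le_mul_of_reflection hα hM hv hrefl hlevel hp (half_pos hε),
    eventually_gt_atTop 0] with m hm hm₀
  have hm₀ : (0 : ℝ) < m := by exact_mod_cast hm₀
  rw [Real.norm_eq_abs, abs_div, Nat.abs_cast, div_lt_iff₀ hm₀]
  linarith [mul_lt_mul_of_pos_right (half_lt_self hε) hm₀]

end Reflection

section

variable {X : Type*} [MeasurableSpace X] {μ : Measure X}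

lemma exists_measurableSet_measure_pos_forall_ge_le {u : ℕ → X → ℝ} (hu : ∀ n, Measurable (u n))
    (h : 0 < μ {x | limsup (fun n => (u n x : EReal)) atTop < ⊤}) :
    ∃ M : ℝ, 0 < M ∧ ∃ N : ℕ,
      MeasurableSet {x | ∀ n ≥ N, u n x ≤ M} ∧ 0 < μ {x | ∀ n ≥ N, u n x ≤ M} := by
  have hsub : {x | limsup (fun n => (u n x : EReal)) atTop < ⊤}
      ⊆ ⋃ M : ℕ, ⋃ N : ℕ, {x | ∀ n ≥ N, u n x ≤ M + 1} := by
    intro x hx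
    obtain ⟨r, hr, -⟩ := EReal.exists_between_coe_real hx
    obtain ⟨N, hN⟩ := eventually_atTop.1 (eventually_lt_of_limsup_lt hr)
    refine Set.mem_iUnion₂.2 ⟨⌈r⌉₊, N, fun n hn => ?_⟩
    have := EReal.coe_lt_coe_iff.1 (hN n hn)
    linarith [Nat.le_ceil r]
  obtain ⟨M, hM⟩ :=
    exists_measure_pos_of_not_measure_iUnion_null (h.trans_le (measure_mono hsub)).ne'
  obtain ⟨N, hN⟩ := exists_measure_pos_of_not_measure_iUnion_null hM.ne'
  refine ⟨M + 1, by positivity, N, ?_, hN⟩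
  simp only [Set.ofPred_forall]
  exact .iInter fun n => .iInter fun _ => measurableSet_le (hu n) measurable_const

lemma tendsto_measureReal_setOf_le_abs [IsFiniteMeasure μ] {f : X → ℝ} (hf : Measurable f) :
    Tendsto (fun L : ℕ => μ.real {x | (L : ℝ) ≤ |f x|}) atTop (𝓝 0) := by
  have hanti : Antitone fun L : ℕ => {x | (L : ℝ) ≤ |f x|} := fun _ _ h _ hx =>
    Set.mem_ofPred.2 ((Nat.cast_le.2 h).trans hx)
  have hempty : ⋂ L : ℕ, {x | (L : ℝ) ≤ |f x|} = ∅ := by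
    refine Set.eq_empty_of_forall_notMem fun x hx => ?_
    obtain ⟨L, hL⟩ := exists_nat_gt |f x|
    exact (Set.mem_iInter.1 hx L).not_gt hL
  have := tendsto_measure_iInter_atTop
    (fun L => (measurableSet_le measurable_const hf.abs).nullMeasurableSet) hanti
    ⟨0, measure_ne_top μ _⟩
  rw [hempty, measure_empty] at this
  exact (ENNReal.tendsto_toReal ENNReal.zero_ne_top).comp this

end

namespace Equiv.Perm

variable {X : Type*} (T : Perm X) (x : X)

lemma measurable_zpow [MeasurableSpace X] (hT : Measurable T)
    (hT' : Measurable T.symm) : ∀ k : ℤ, Measurable ⇑(T ^ k)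
  | (n : ℕ) => by rw [zpow_natCast, coe_pow]; exact hT.iterate n
  | .negSucc n => by rw [zpow_negSucc, ← inv_pow, coe_pow]; exact hT'.iterate (n + 1)

lemma inv_pow_apply_pow_apply (n j : ℕ) : (T⁻¹ ^ n) ((T ^ j) x) = (T ^ ((j : ℤ) - n)) x := by
  rw [← mul_apply, inv_pow, ← zpow_natCast, ← zpow_natCast, ← zpow_neg, ← zpow_add,
    neg_add_eq_sub]

lemma zpow_apply_pow_apply (k : ℤ) (j : ℕ) : (T ^ k) ((T ^ j) x) = (T ^ ((j : ℤ) + k)) x := by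
  rw [← mul_apply, ← zpow_natCast, ← zpow_add, add_comm]

end Equiv.Perm

theorem proposition2_residual_difference_general
    {X : Type*} [MeasurableSpace X] (μ : Measure X) [IsProbabilityMeasure μ]
    (T : Equiv.Perm X) (hTmeas' : Measurable (⇑T.symm))
    (hT : Ergodic (⇑T) μ)
    (f : X → ℝ) (hf : Measurable f) (q : ℤ)
    (hpos : 0 < μ {x | limsup (fun n : ℕ =>
      ((|f ((T⁻¹ ^ n) x) - f ((T ^ ((n : ℤ) + q)) x)| / (n : ℝ) : ℝ) : EReal)) atTop < ⊤}) :
    ∀ᵐ x ∂μ, Tendsto (fun n : ℕ => f ((T ^ n) x) / (n : ℝ)) atTop (𝓝 0) := by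
  have hTz := Equiv.Perm.measurable_zpow T hT.measurable hTmeas'
  obtain ⟨M, hM, N, hA_meas, hA⟩ := exists_measurableSet_measure_pos_forall_ge_le
    (u := fun n x => |f ((T⁻¹ ^ n) x) - f ((T ^ ((n : ℤ) + q)) x)| / n)
    (fun n => ((hf.comp (by simpa using hTz (-n))).sub (hf.comp (hTz _))).abs.div_const _) hpos
  filter_upwards [hT.ae_tendsto_card_filter_range_div hA_meas,
    ae_all_iff.2 fun L : ℕ => hT.ae_tendsto_card_filter_range_div
      (measurableSet_le measurable_const hf.abs : MeasurableSet {y | (L : ℝ) ≤ |f y|})]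
    with x hxA hxL
  simpa using tendsto_div_natCast_of_reflection (b := fun s : ℤ => f ((T ^ s) x))
    (ENNReal.toReal_pos hA.ne' (measure_ne_top _ _)) hM hxA
    (fun j hj n hn => by
      simpa only [Equiv.Perm.iterate_eq_pow, Equiv.Perm.inv_pow_apply_pow_apply,
        Equiv.Perm.zpow_apply_pow_apply] using hj n hn)
    (fun L => by simpa [Equiv.Perm.iterate_eq_pow] using hxL L)
    (tendsto_measureReal_setOf_le_abs hf)

/-- **Proposition 2.** Let `f` be a finite measurable function on an ergodic
invertible probability-preserving system `(X, μ, T)` and let `q` be a fixed integer.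
If `limsup (1/n) |f ∘ T^{-n} - f ∘ T^{n+q}| < +∞` almost everywhere on a set of
positive measure, then `(1/n) f ∘ T^n → 0` almost everywhere on `X`. -/
theorem proposition2_residual_difference
    {X : Type*} [MeasurableSpace X] (μ : Measure X) [IsProbabilityMeasure μ]
    (T : Equiv.Perm X) (hTmeas : Measurable (⇑T)) (hTmeas' : Measurable (⇑T.symm))
    (hT : Ergodic (⇑T) μ)
    (f : X → ℝ) (hf : Measurable f) (q : ℤ)
    (hpos : 0 < μ {x | limsup (fun n : ℕ =>
      ((|f ((T⁻¹ ^ n) x) - f ((T ^ ((n : ℤ) + q)) x)| / (n : ℝ) : ℝ) : EReal)) atTop < ⊤}) :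
    ∀ᵐ x ∂μ, Tendsto (fun n : ℕ => f ((T ^ n) x) / (n : ℝ)) atTop (𝓝 0) :=
  proposition2_residual_difference_general μ T hTmeas' hT f hf q hpos
end

section
/- Let f be a finite measurable function on (X, 𝒳, μ, T). If limsup_n (1/n)|f∘T^{-n} + f∘T^n| < +∞ almost everywhere on a set of positive measure, then (1/n) f∘T^n converges to 0 μ-almost everywhere on X. -/
/-!
For suitable `M, N` the set `B` of points `y` with `|f (T⁻ⁿ y) + f (Tⁿ y)| ≤ M n` for all `n ≥ N`
has positive measure. By the pointwise ergodic theorem, for a.e. `x` and all large `k` the orbit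
of `x` visits `B` at some time `v ∈ [k/2, 3k/4]`; reflecting about `Tᵛ x ∈ B` bounds `|f (Tᵏ x)|`
by `M (k - v) + |f (T^(2v-k) x)|`, an earlier value, so `|f (Tᵏ x)| = O(k)`. If a.e.
`|f (Tⁿ x)| ≤ q n` eventually, the points obeying this from a fixed time on form a set of
positive measure, and a visit to it at a time `k ∈ [m/2, 3m/4]` gives
`|f (Tᵐ x)| ≤ q (m - k) ≤ q m / 2`. Halving repeatedly, `f (Tⁿ x) = o(n)`.

The ergodic case of the pointwise ergodic theorem follows from the maximal ergodic theorem: when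
`∫ g < 0`, the set where the Birkhoff sums of `g` are unbounded above is invariant, hence null or
conull, and the maximal ergodic theorem rules out conull.
-/

open MeasureTheory Filter Topology

section BirkhoffSum

variable {α : Type*} (f : α → α) (g : α → ℝ)

noncomputable def birkhoffMax (N : ℕ) : α → ℝ :=
  (Finset.range (N + 1)).sup' Finset.nonempty_range_add_one fun n => birkhoffSum f g n

theorem birkhoffMax_apply (N : ℕ) (x : α) : birkhoffMax f g N x =
    (Finset.range (N + 1)).sup' Finset.nonempty_range_add_one fun n => birkhoffSum f g n x :=
  Finset.sup'_apply _ _ _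

theorem exists_birkhoffMax_eq (N : ℕ) (x : α) :
    ∃ n ≤ N, birkhoffMax f g N x = birkhoffSum f g n x := by
  obtain ⟨n, hn, heq⟩ := Finset.exists_mem_eq_sup' (s := Finset.range (N + 1))
    Finset.nonempty_range_add_one fun n => birkhoffSum f g n x
  exact ⟨n, Finset.mem_range_succ_iff.1 hn, (birkhoffMax_apply f g N x).trans heq⟩

theorem birkhoffSum_le_birkhoffMax {n N : ℕ} (h : n ≤ N) (x : α) :
    birkhoffSum f g n x ≤ birkhoffMax f g N x := by
  rw [birkhoffMax_apply]
  exact Finset.le_sup' (fun n => birkhoffSum f g n x) (Finset.mem_range_succ_iff.2 h)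

theorem birkhoffMax_nonneg (N : ℕ) (x : α) : 0 ≤ birkhoffMax f g N x := by
  simpa [birkhoffSum_zero] using birkhoffSum_le_birkhoffMax f g N.zero_le x

theorem birkhoffMax_mono : Monotone (birkhoffMax f g) := fun N N' h x => by
  rw [birkhoffMax_apply]
  exact Finset.sup'_le _ _ fun n hn =>
    birkhoffSum_le_birkhoffMax f g ((Finset.mem_range_succ_iff.1 hn).trans h) x

theorem exists_birkhoffSum_pos_iff (x : α) :
    (∃ n, 0 < birkhoffSum f g n x) ↔ ∃ N, 0 < birkhoffMax f g N x := by
  refine ⟨fun ⟨n, hn⟩ => ⟨n, hn.trans_le (birkhoffSum_le_birkhoffMax f g le_rfl x)⟩,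
    fun ⟨N, hN⟩ => ?_⟩
  obtain ⟨n, -, hn⟩ := exists_birkhoffMax_eq f g N x
  exact ⟨n, hn ▸ hN⟩

theorem birkhoffMax_le_add_birkhoffMax_apply {N : ℕ} {x : α} (hx : 0 < birkhoffMax f g N x) :
    birkhoffMax f g N x ≤ g x + birkhoffMax f g N (f x) := by
  obtain ⟨n, hn, heq⟩ := exists_birkhoffMax_eq f g N x
  rw [heq] at hx ⊢
  cases n with
  | zero => simp [birkhoffSum_zero] at hx
  | succ n =>
    rw [birkhoffSum_succ']
    gcongr
    exact birkhoffSum_le_birkhoffMax f g (by omega) _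

theorem bddAbove_range_birkhoffSum_apply_iff (x : α) :
    BddAbove (Set.range fun n => birkhoffSum f g n (f x)) ↔
      BddAbove (Set.range fun n => birkhoffSum f g n x) := by
  constructor
  · rintro ⟨C, hC⟩
    refine ⟨max 0 (g x + C), ?_⟩
    rintro _ ⟨_ | n, rfl⟩
    · simp [birkhoffSum_zero]
    · have : birkhoffSum f g n (f x) ≤ C := hC ⟨n, rfl⟩
      show birkhoffSum f g (n + 1) x ≤ _
      rw [birkhoffSum_succ']
      exact le_max_of_le_right (by linarith)
  · rintro ⟨C, hC⟩
    refine ⟨C - g x, ?_⟩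
    rintro _ ⟨n, rfl⟩
    have : birkhoffSum f g (n + 1) x ≤ C := hC ⟨n + 1, rfl⟩
    rw [birkhoffSum_succ'] at this
    show birkhoffSum f g n (f x) ≤ C - g x
    linarith

variable {g}

theorem monotone_birkhoffSum (hg : 0 ≤ g) (x : α) : Monotone (birkhoffSum f g · x) :=
  monotone_nat_of_le_succ fun n => by
    rw [birkhoffSum_succ]
    exact le_add_of_nonneg_right (hg _)

variable {f}

theorem exists_iterate_mem_of_birkhoffSum_indicator_lt {B : Set α} {x : α} {k₀ k₁ : ℕ}
    (h : birkhoffSum f (B.indicator (1 : α → ℝ)) k₀ x < birkhoffSum f (B.indicator 1) k₁ x) :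
    ∃ k, k₀ ≤ k ∧ k < k₁ ∧ f^[k] x ∈ B := by
  have hk : k₀ < k₁ := lt_of_not_ge fun hk =>
    h.not_ge (monotone_birkhoffSum f (Set.indicator_nonneg fun _ _ => zero_le_one) x hk)
  obtain ⟨j, rfl⟩ := Nat.exists_eq_add_of_le hk.le
  rw [birkhoffSum_add, lt_add_iff_pos_right] at h
  obtain ⟨i, hi, hiB⟩ := Finset.exists_ne_zero_of_sum_ne_zero h.ne'
  refine ⟨i + k₀, by omega, by simp at hi; omega, ?_⟩
  rw [Function.iterate_add_apply]
  exact Set.mem_of_indicator_ne_zero hiB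

end BirkhoffSum

section RealSequences

theorem eventually_inv_mul_lt_of_le_mul_add {s : ℕ → ℝ} {c C d : ℝ} (h : ∀ n, s n ≤ n * c + C)
    (hcd : c < d) : ∀ᶠ n : ℕ in atTop, (n : ℝ)⁻¹ * s n < d := by
  have hlim : Tendsto (fun n : ℕ => c + C * (n : ℝ)⁻¹) atTop (𝓝 c) := by
    simpa using tendsto_const_nhds.add (tendsto_inv_atTop_nhds_zero_nat.const_mul C)
  filter_upwards [hlim.eventually_lt_const hcd, eventually_gt_atTop 0] with n hn hn0
  calc (n : ℝ)⁻¹ * s n ≤ (n : ℝ)⁻¹ * (n * c + C) := by gcongr; exact h n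
    _ = c + C * (n : ℝ)⁻¹ := by field_simp
    _ < d := hn

theorem tendsto_comp_div_of_tendsto_inv_mul {s : ℕ → ℝ} {L c : ℝ} {k : ℕ → ℕ}
    (hs : Tendsto (fun n : ℕ => (n : ℝ)⁻¹ * s n) atTop (𝓝 L)) (hk : Tendsto k atTop atTop)
    (hkc : Tendsto (fun m : ℕ => (k m : ℝ) / m) atTop (𝓝 c)) :
    Tendsto (fun m : ℕ => s (k m) / m) atTop (𝓝 (c * L)) := by
  refine (hkc.mul (hs.comp hk)).congr' ?_
  filter_upwards [hk.eventually_ne_atTop 0] with m hm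
  simp only [Function.comp_apply]
  field_simp

theorem tendsto_div_natCast_zero_of_eventually_abs_le {u : ℕ → ℝ}
    (h : ∀ ε > 0, ∀ᶠ n in atTop, |u n| ≤ ε * n) : Tendsto (fun n => u n / n) atTop (𝓝 0) :=
  (Asymptotics.isLittleO_iff.2 fun ε hε => (h ε hε).mono fun n hn => by
    simpa only [Real.norm_eq_abs, Nat.abs_cast] using hn).tendsto_div_nhds_zero

theorem exists_nat_forall_ge_le_mul_of_limsup_lt_top {a : ℕ → ℝ}
    (h : limsup (fun n : ℕ => ((a n / n : ℝ) : EReal)) atTop < ⊤) :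
    ∃ M N : ℕ, ∀ n ≥ N, a n ≤ M * n := by
  obtain ⟨r, hlt, hr⟩ := exists_between h
  have hr' : r = (r.toReal : EReal) := (EReal.coe_toReal hr.ne (bot_le.trans_lt hlt).ne').symm
  obtain ⟨N, hN⟩ := eventually_atTop.1 (eventually_lt_of_limsup_lt hlt)
  refine ⟨⌈r.toReal⌉₊, max N 1, fun n hn => ?_⟩
  have hn₀ : (0 : ℝ) < n := by exact_mod_cast (le_max_right N 1).trans hn
  have han : a n / n < r.toReal := by exact_mod_cast hr' ▸ hN n ((le_max_left N 1).trans hn)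
  rw [div_lt_iff₀ hn₀] at han
  nlinarith [Nat.le_ceil r.toReal]

theorem exists_abs_le_mul_add_of_abs_add_le {u : ℕ → ℝ} {M : ℝ} {N : ℕ} (hM : 0 ≤ M)
    (h : ∀ᶠ m : ℕ in atTop, ∃ v : ℕ, 2⁻¹ * (m : ℝ) ≤ v ∧ (v : ℝ) ≤ 3 / 4 * m ∧
      ∀ n ≥ N, n ≤ v → |u (v - n) + u (n + v)| ≤ M * n) :
    ∃ C, ∀ k, |u k| ≤ M * k + C := by
  obtain ⟨m₀, hm₀⟩ := eventually_atTop.1 h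
  set K := max m₀ (4 * N)
  refine ⟨∑ k ∈ Finset.range (K + 1), |u k|, fun k => ?_⟩
  induction k using Nat.strong_induction_on with
  | _ k ih =>
  rcases le_or_gt k K with hk | hk
  · have := Finset.single_le_sum (fun i _ => abs_nonneg (u i)) (Finset.mem_range_succ_iff.2 hk)
    nlinarith [k.cast_nonneg (α := ℝ)]
  obtain ⟨v, hv₁, hv₂, hv⟩ := hm₀ k (by omega)
  have hkv : k ≤ 2 * v := by exact_mod_cast (by linarith : (k : ℝ) ≤ 2 * v)
  have hvk : 4 * v ≤ 3 * k := by exact_mod_cast (by linarith : 4 * (v : ℝ) ≤ 3 * k)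
  have hrefl := hv (k - v) (by omega) (by omega)
  rw [show v - (k - v) = 2 * v - k by omega, show k - v + v = k by omega] at hrefl
  have hprev := ih (2 * v - k) (by omega)
  have hsum : ((k - v : ℕ) : ℝ) + ((2 * v - k : ℕ) : ℝ) ≤ k := by
    exact_mod_cast (show k - v + (2 * v - k) ≤ k by omega)
  have htri : |u k| ≤ |u (2 * v - k) + u k| + |u (2 * v - k)| := by
    simpa using abs_sub (u (2 * v - k) + u k) (u (2 * v - k))
  nlinarith [mul_le_mul_of_nonneg_left hsum hM]

end RealSequences

section Measurability

variable {X : Type*} [MeasurableSpace X] {R : X → X} {g : X → ℝ}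

theorem measurable_birkhoffSum (hR : Measurable R) (hg : Measurable g) (n : ℕ) :
    Measurable (birkhoffSum R g n) :=
  Finset.measurable_sum _ fun k _ => hg.comp (hR.iterate k)

theorem measurable_birkhoffMax (hR : Measurable R) (hg : Measurable g) (N : ℕ) :
    Measurable (birkhoffMax R g N) :=
  Finset.measurable_range_sup' fun n _ => measurable_birkhoffSum hR hg n

theorem measurableSet_setOf_forall_ge_le {φ : ℕ → X → ℝ} (hφ : ∀ n, Measurable (φ n))
    (c : ℕ → ℝ) (N : ℕ) : MeasurableSet {y | ∀ n ≥ N, φ n y ≤ c n} := by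
  simp only [Set.ofPred_forall]
  exact MeasurableSet.iInter fun n => MeasurableSet.iInter fun _ =>
    measurableSet_le (hφ n) measurable_const

end Measurability

namespace MeasureTheory.MeasurePreserving

variable {X : Type*} [MeasurableSpace X] {μ : Measure X} {R : X → X} {g : X → ℝ}

theorem integrable_birkhoffSum_s12 (hR : MeasurePreserving R μ μ) (hg : Integrable g μ) (n : ℕ) :
    Integrable (birkhoffSum R g n) μ :=
  integrable_finsetSum _ fun k _ => (hR.iterate k).integrable_comp_of_integrable hg

theorem integrable_birkhoffMax (hR : MeasurePreserving R μ μ) (hg : Integrable g μ) (N : ℕ) :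
    Integrable (birkhoffMax R g N) μ :=
  Finset.sup'_induction (p := fun φ => Integrable φ μ) _ _ (fun _ h₁ _ h₂ => h₁.sup h₂)
    fun n _ => hR.integrable_birkhoffSum_s12 hg n

theorem setIntegral_birkhoffMax_pos_nonneg (hR : MeasurePreserving R μ μ) (hg : Measurable g)
    (hgi : Integrable g μ) (N : ℕ) : 0 ≤ ∫ x in {x | 0 < birkhoffMax R g N x}, g x ∂μ := by
  set M := birkhoffMax R g N
  have hM : Measurable M := measurable_birkhoffMax hR.measurable hg N
  have hMi : Integrable M μ := hR.integrable_birkhoffMax hgi N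
  have hMRi : Integrable (M ∘ R) μ := hR.integrable_comp_of_integrable hMi
  have hE : MeasurableSet {x | 0 < M x} := measurableSet_lt measurable_const hM
  have hMR : ∫ x, M (R x) ∂μ = ∫ x, M x ∂μ := by
    rw [← integral_map hR.measurable.aemeasurable hM.aestronglyMeasurable, hR.map_eq]
  calc 0 = ∫ x, M x ∂μ - ∫ x, M (R x) ∂μ := by rw [hMR, sub_self]
    _ ≤ ∫ x in {x | 0 < M x}, M x ∂μ - ∫ x in {x | 0 < M x}, M (R x) ∂μ := by
      rw [setIntegral_eq_integral_of_forall_compl_eq_zero (s := {x | 0 < M x}) fun x hx =>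
        (birkhoffMax_nonneg R g N x).antisymm' (not_lt.1 hx)]
      exact sub_le_sub_left (setIntegral_le_integral hMRi
        (ae_of_all _ fun x => birkhoffMax_nonneg R g N (R x))) _
    _ = ∫ x in {x | 0 < M x}, (M x - M (R x)) ∂μ :=
      (integral_sub hMi.integrableOn hMRi.integrableOn).symm
    _ ≤ ∫ x in {x | 0 < M x}, g x ∂μ :=
      setIntegral_mono_on (hMi.sub hMRi).integrableOn hgi.integrableOn hE fun x hx => by
        linarith [birkhoffMax_le_add_birkhoffMax_apply R g hx]

theorem setIntegral_birkhoffSum_pos_nonneg (hR : MeasurePreserving R μ μ) (hg : Measurable g)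
    (hgi : Integrable g μ) : 0 ≤ ∫ x in {x | ∃ n, 0 < birkhoffSum R g n x}, g x ∂μ := by
  have hunion : {x | ∃ n, 0 < birkhoffSum R g n x} = ⋃ N, {x | 0 < birkhoffMax R g N x} := by
    ext x
    simp [exists_birkhoffSum_pos_iff]
  rw [hunion]
  refine ge_of_tendsto' (tendsto_setIntegral_of_monotone (fun N =>
    measurableSet_lt measurable_const (measurable_birkhoffMax hR.measurable hg N)) ?_
    hgi.integrableOn) (hR.setIntegral_birkhoffMax_pos_nonneg hg hgi)
  exact fun N N' h x hx => hx.trans_le (birkhoffMax_mono R g h x)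

end MeasureTheory.MeasurePreserving

namespace Ergodic

variable {X : Type*} [MeasurableSpace X] {μ : Measure X} {R : X → X} {g f : X → ℝ}

theorem ae_bddAbove_birkhoffSum (hR : Ergodic R μ) (hg : Measurable g) (hgi : Integrable g μ)
    (hneg : ∫ x, g x ∂μ < 0) : ∀ᵐ x ∂μ, BddAbove (Set.range fun n => birkhoffSum R g n x) := by
  have hF : MeasurableSet {x | BddAbove (Set.range fun n => birkhoffSum R g n x)} :=
    measurableSet_bddAbove_range (measurable_birkhoffSum hR.measurable hg)
  refine (hR.ae_mem_or_ae_notMem hF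
    (Set.ext fun x => bddAbove_range_birkhoffSum_apply_iff R g x)).resolve_right
    fun hunbdd => hneg.not_ge ?_
  have hpos : {x | ∃ n, 0 < birkhoffSum R g n x} =ᵐ[μ] Set.univ :=
    eventuallyEq_univ.2 <| hunbdd.mono fun x hx => by
      obtain ⟨_, ⟨n, rfl⟩, hn⟩ := not_bddAbove_iff.1 hx 0
      exact ⟨n, hn⟩
  calc 0 ≤ ∫ x in {x | ∃ n, 0 < birkhoffSum R g n x}, g x ∂μ :=
        hR.toMeasurePreserving.setIntegral_birkhoffSum_pos_nonneg hg hgi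
    _ = ∫ x, g x ∂μ := by rw [setIntegral_congr_set hpos, setIntegral_univ]

variable [IsProbabilityMeasure μ]

theorem ae_exists_birkhoffSum_le (hR : Ergodic R μ) (hg : Measurable g) (hgi : Integrable g μ)
    {c : ℝ} (hc : ∫ x, g x ∂μ < c) : ∀ᵐ x ∂μ, ∃ C, ∀ n, birkhoffSum R g n x ≤ n * c + C := by
  have hbdd := hR.ae_bddAbove_birkhoffSum (g := fun x => g x - c) (hg.sub_const c)
    (hgi.sub (integrable_const c)) (by rw [integral_sub hgi (integrable_const c)]; simpa using hc)
  filter_upwards [hbdd] with x ⟨C, hC⟩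
  refine ⟨C, fun n => ?_⟩
  have : birkhoffSum R (fun x => g x - c) n x ≤ C := hC ⟨n, rfl⟩
  simp only [birkhoffSum, Finset.sum_sub_distrib, Finset.sum_const, Finset.card_range,
    nsmul_eq_mul] at this ⊢
  linarith

theorem ae_tendsto_birkhoffAverage (hR : Ergodic R μ) (hg : Measurable g) (hgi : Integrable g μ) :
    ∀ᵐ x ∂μ, Tendsto (birkhoffAverage ℝ R g · x) atTop (𝓝 (∫ x, g x ∂μ)) := by
  have hup : ∀ᵐ x ∂μ, ∀ c : {c : ℚ // ∫ x, g x ∂μ < c},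
      ∃ C, ∀ n, birkhoffSum R g n x ≤ n * c + C :=
    ae_all_iff.2 fun c => hR.ae_exists_birkhoffSum_le hg hgi c.2
  have hlow : ∀ᵐ x ∂μ, ∀ c : {c : ℚ // c < ∫ x, g x ∂μ},
      ∃ C, ∀ n, birkhoffSum R (-g) n x ≤ n * -c + C :=
    ae_all_iff.2 fun c => hR.ae_exists_birkhoffSum_le hg.neg hgi.neg
      (by simpa [integral_neg] using c.2)
  filter_upwards [hup, hlow] with x hup hlow
  refine tendsto_order.2 ⟨fun d hd => ?_, fun d hd => ?_⟩
  · obtain ⟨c, hdc, hc⟩ := exists_rat_btwn hd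
    obtain ⟨C, hC⟩ := hlow ⟨c, hc⟩
    filter_upwards [eventually_inv_mul_lt_of_le_mul_add hC (neg_lt_neg hdc)] with n hn
    rw [birkhoffSum_neg, mul_neg] at hn
    rw [birkhoffAverage, smul_eq_mul]
    linarith
  · obtain ⟨c, hc, hcd⟩ := exists_rat_btwn hd
    obtain ⟨C, hC⟩ := hup ⟨c, hc⟩
    exact eventually_inv_mul_lt_of_le_mul_add hC hcd

theorem ae_eventually_exists_iterate_mem (hR : Ergodic R μ) {B : Set X} (hB : MeasurableSet B)
    (hμB : μ B ≠ 0) {a b : ℝ} (ha : 0 < a) (hab : a < b) :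
    ∀ᵐ x ∂μ, ∀ᶠ m : ℕ in atTop, ∃ k : ℕ, a * m ≤ k ∧ k ≤ b * m ∧ R^[k] x ∈ B := by
  set g := B.indicator (1 : X → ℝ)
  have hpos : 0 < ∫ x, g x ∂μ := by
    rw [integral_indicator_one hB]
    exact ENNReal.toReal_pos hμB (measure_ne_top μ B)
  have hb : 0 < b := ha.trans hab
  filter_upwards [hR.ae_tendsto_birkhoffAverage (measurable_one.indicator hB)
    ((integrable_const 1).indicator hB)] with x hx
  -- the number of visits at times in `[⌈a m⌉, ⌊b m⌋)` grows like `(b - a) m μ(B)`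
  have hup := tendsto_comp_div_of_tendsto_inv_mul (s := (birkhoffSum R g · x)) hx
    (tendsto_nat_floor_atTop.comp (tendsto_natCast_atTop_atTop.const_mul_atTop hb))
    ((tendsto_nat_floor_mul_div_atTop hb.le).comp tendsto_natCast_atTop_atTop)
  have hlow := tendsto_comp_div_of_tendsto_inv_mul (s := (birkhoffSum R g · x)) hx
    (tendsto_nat_ceil_atTop.comp (tendsto_natCast_atTop_atTop.const_mul_atTop ha))
    ((tendsto_nat_ceil_mul_div_atTop ha.le).comp tendsto_natCast_atTop_atTop)
  filter_upwards [(hup.sub hlow).eventually_const_lt (show (0 : ℝ) < _ by nlinarith)]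
    with m hm
  rw [← sub_div] at hm
  obtain ⟨k, hk₀, hk₁, hkB⟩ := exists_iterate_mem_of_birkhoffSum_indicator_lt (sub_pos.1 <|
    lt_of_not_ge fun h => hm.not_ge (div_nonpos_of_nonpos_of_nonneg h m.cast_nonneg))
  refine ⟨k, (Nat.le_ceil _).trans (by exact_mod_cast hk₀), ?_, hkB⟩
  exact (Nat.cast_le.2 hk₁.le).trans (Nat.floor_le (by positivity))

theorem ae_eventually_abs_le_half_mul (hR : Ergodic R μ) (hf : Measurable f) {q : ℝ} (hq : 0 ≤ q)
    (h : ∀ᵐ x ∂μ, ∀ᶠ n in atTop, |f (R^[n] x)| ≤ q * n) :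
    ∀ᵐ x ∂μ, ∀ᶠ n in atTop, |f (R^[n] x)| ≤ q / 2 * n := by
  set A : ℕ → Set X := fun N => {y | ∀ n ≥ N, |f (R^[n] y)| ≤ q * n}
  have hA : ∀ N, MeasurableSet (A N) := measurableSet_setOf_forall_ge_le
    (fun n => (hf.comp (hR.measurable.iterate n)).abs) _
  obtain ⟨N, hN⟩ : ∃ N, 0 < μ (A N) := by
    refine exists_measure_pos_of_not_measure_iUnion_null fun h0 => ?_
    obtain ⟨x, hx, hxA⟩ := (h.and (measure_eq_zero_iff_ae_notMem.1 h0)).exists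
    exact hxA (Set.mem_iUnion.2 (eventually_atTop.1 hx))
  filter_upwards [hR.ae_eventually_exists_iterate_mem (hA N) hN.ne' (a := 2⁻¹) (b := 3 / 4)
    (by norm_num) (by norm_num)] with x hx
  filter_upwards [hx, eventually_ge_atTop (4 * N)] with m ⟨k, hk₁, hk₂, hkA⟩ hm
  have hkm : m ≤ 2 * k := by exact_mod_cast (by linarith : (m : ℝ) ≤ 2 * k)
  have hkm' : 4 * k ≤ 3 * m := by exact_mod_cast (by linarith : 4 * (k : ℝ) ≤ 3 * m)
  have hstep := hkA (m - k) (by omega)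
  rw [← Function.iterate_add_apply, Nat.sub_add_cancel (by omega)] at hstep
  have hmk : 2 * ((m - k : ℕ) : ℝ) ≤ m := by exact_mod_cast (show 2 * (m - k) ≤ m by omega)
  nlinarith

theorem ae_tendsto_div_of_ae_eventually_abs_le (hR : Ergodic R μ) (hf : Measurable f) {q : ℝ}
    (hq : 0 ≤ q) (h : ∀ᵐ x ∂μ, ∀ᶠ n in atTop, |f (R^[n] x)| ≤ q * n) :
    ∀ᵐ x ∂μ, Tendsto (fun n => f (R^[n] x) / n) atTop (𝓝 0) := by
  have hhalf : ∀ t : ℕ, ∀ᵐ x ∂μ, ∀ᶠ n in atTop, |f (R^[n] x)| ≤ q * 2⁻¹ ^ t * n := by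
    intro t
    induction t with
    | zero => simpa using h
    | succ t ih =>
      simpa [pow_succ, mul_assoc, div_eq_mul_inv] using
        hR.ae_eventually_abs_le_half_mul hf (by positivity) ih
  filter_upwards [ae_all_iff.2 hhalf] with x hx
  refine tendsto_div_natCast_zero_of_eventually_abs_le fun ε hε => ?_
  obtain ⟨t, ht⟩ := exists_pow_lt_of_lt_one (div_pos hε (by positivity : (0 : ℝ) < q + 1))
    (by norm_num : (2⁻¹ : ℝ) < 1)
  rw [lt_div_iff₀ (by positivity)] at ht
  have hqt : q * 2⁻¹ ^ t ≤ ε := by nlinarith [pow_pos (by norm_num : (0 : ℝ) < 2⁻¹) t]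
  exact (hx t).mono fun n hn => hn.trans (mul_le_mul_of_nonneg_right hqt n.cast_nonneg)

end Ergodic

theorem Equiv.Perm.inv_pow_apply_pow_apply_s12 {α : Type*} (T : Equiv.Perm α) {n v : ℕ} (h : n ≤ v)
    (x : α) : (T⁻¹ ^ n) ((T ^ v) x) = (T ^ (v - n)) x := by
  obtain ⟨k, rfl⟩ := Nat.exists_eq_add_of_le h
  simp [pow_add, Equiv.Perm.mul_apply]

theorem proposition3_residual_sum_general
    {X : Type*} [MeasurableSpace X] (μ : Measure X) [IsProbabilityMeasure μ]
    (T : Equiv.Perm X) (hTmeas' : Measurable (⇑T.symm))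
    (hT : Ergodic (⇑T) μ)
    (f : X → ℝ) (hf : Measurable f)
    (hpos : 0 < μ {x | limsup (fun n : ℕ =>
      ((|f ((T⁻¹ ^ n) x) + f ((T ^ n) x)| / (n : ℝ) : ℝ) : EReal)) atTop < ⊤}) :
    ∀ᵐ x ∂μ, Tendsto (fun n : ℕ => f ((T ^ n) x) / (n : ℝ)) atTop (𝓝 0) := by
  set B : ℕ × ℕ → Set X := fun p => {y | ∀ n ≥ p.2, |f ((T⁻¹ ^ n) y) + f ((T ^ n) y)| ≤ p.1 * n}
  obtain ⟨⟨M, N⟩, hB⟩ : ∃ p, 0 < μ (B p) :=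
    exists_measure_pos_of_not_measure_iUnion_null fun h0 => hpos.ne' <| measure_mono_null
      (fun x hx => Set.mem_iUnion.2 <| by
        obtain ⟨M, N, hMN⟩ := exists_nat_forall_ge_le_mul_of_limsup_lt_top hx
        exact ⟨(M, N), hMN⟩) h0
  have hBm : MeasurableSet (B (M, N)) := measurableSet_setOf_forall_ge_le (fun n =>
    ((hf.comp (by rw [Equiv.Perm.coe_pow]; exact hTmeas'.iterate n)).add
      (hf.comp (by rw [Equiv.Perm.coe_pow]; exact hT.measurable.iterate n))).abs) _ N
  have hlin : ∀ᵐ x ∂μ, ∀ᶠ n in atTop, |f (T^[n] x)| ≤ (M + 1) * n := by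
    filter_upwards [hT.ae_eventually_exists_iterate_mem hBm hB.ne' (a := 2⁻¹) (b := 3 / 4)
      (by norm_num) (by norm_num)] with x hx
    obtain ⟨C, hC⟩ := exists_abs_le_mul_add_of_abs_add_le (u := fun k => f ((T ^ k) x))
      M.cast_nonneg <| hx.mono fun m ⟨v, hv₁, hv₂, hvB⟩ => ⟨v, hv₁, hv₂, fun n hn hnv => by
        rw [← Equiv.Perm.coe_pow] at hvB
        simpa [← T.inv_pow_apply_pow_apply_s12 hnv, pow_add] using hvB n hn⟩
    filter_upwards [eventually_ge_atTop ⌈C⌉₊] with n hn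
    have := Nat.ceil_le.1 hn
    rw [← Equiv.Perm.coe_pow]
    nlinarith [hC n]
  simpa only [Equiv.Perm.coe_pow] using
    hT.ae_tendsto_div_of_ae_eventually_abs_le hf (by positivity) hlin

/-- **Proposition 3.** Let `f` be a finite measurable function on an ergodic
invertible probability-preserving system `(X, μ, T)`. If
`limsup (1/n) |f ∘ T^{-n} + f ∘ T^n| < +∞` almost everywhere on a set of positive
measure, then `(1/n) f ∘ T^n → 0` almost everywhere on `X`. -/
theorem proposition3_residual_sum
    {X : Type*} [MeasurableSpace X] (μ : Measure X) [IsProbabilityMeasure μ]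
    (T : Equiv.Perm X) (hTmeas : Measurable (⇑T)) (hTmeas' : Measurable (⇑T.symm))
    (hT : Ergodic (⇑T) μ)
    (f : X → ℝ) (hf : Measurable f)
    (hpos : 0 < μ {x | limsup (fun n : ℕ =>
      ((|f ((T⁻¹ ^ n) x) + f ((T ^ n) x)| / (n : ℝ) : ℝ) : EReal)) atTop < ⊤}) :
    ∀ᵐ x ∂μ, Tendsto (fun n : ℕ => f ((T ^ n) x) / (n : ℝ)) atTop (𝓝 0) :=
  proposition3_residual_sum_general μ T hTmeas' hT f hf hpos
end
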